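/- arXiv:2009.01678 — 4 statements merged into one kernel-verified Lean document; each statement's English description precedes it below -/
import Mathlib

section
/- Let S ∈ S^{K^p}_+ be a positive semidefinite matrix and define H(q) = S · q^{⊗p} for q ∈ S^K_+ (entrywise inner product). Then the differential DH(q) of H at each q ∈ S^K_+ is a positive semidefinite symmetric matrix; equivalently, a · DH(q) ≥ 0 for every positive semidefinite symmetric a. -/
/-!
Along `q + s • a` the derivative at `s = 0` of `H` is `∑ m, S · (q ⊗ ⋯ ⊗ a ⊗ ⋯ ⊗ q)`, with `a` in
slot `m`. A tensor product of positive semidefinite matrices is an entrywise (Schur) product of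
positive semidefinite matrices, hence positive semidefinite, and the entrywise pairing of two
positive semidefinite matrices is the sum of the entries of their Schur product, hence
nonnegative.
-/

open Finset Matrix
open scoped ComplexOrder

namespace Matrix

variable {𝕜 : Type*} [RCLike 𝕜]

theorem PosSemidef.sum_apply_nonneg {n : Type*} [Fintype n] {A : Matrix n n 𝕜}
    (hA : A.PosSemidef) : 0 ≤ ∑ i, ∑ j, A i j := by
  simpa [dotProduct, mulVec, Finset.sum_comm (γ := n)] using hA.dotProduct_mulVec_nonneg 1

theorem PosSemidef.sum_mul_apply_nonneg {n : Type*} [Fintype n] {A B : Matrix n n 𝕜}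
    (hA : A.PosSemidef) (hB : B.PosSemidef) : 0 ≤ ∑ i, ∑ j, A i j * B i j :=
  (hA.hadamard hB).sum_apply_nonneg

theorem posSemidef_of_prod_apply {ι κ : Type*} [Fintype ι] [Fintype κ] {B : ι → Matrix κ κ 𝕜}
    (hB : ∀ n, (B n).PosSemidef) :
    (of fun x y : ι → κ => ∏ n, B n (x n) (y n)).PosSemidef := by
  classical
  suffices ∀ s : Finset ι, (of fun x y : ι → κ => ∏ n ∈ s, B n (x n) (y n)).PosSemidef from
    this univ
  intro s
  induction s using Finset.induction_on with
  | empty => simpa [vecMulVec] using posSemidef_vecMulVec_self_star (fun _ : ι → κ => (1 : 𝕜))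
  | insert m s hm ih =>
    simp_rw [prod_insert hm]
    exact ((hB m).submatrix (· m)).hadamard ih

end Matrix

theorem hasDerivAt_prod_add_mul {ι 𝕜 : Type*} [Fintype ι] [DecidableEq ι]
    [NontriviallyNormedField 𝕜] (f g : ι → 𝕜) :
    HasDerivAt (fun s => ∏ n, (f n + s * g n)) (∑ m, ∏ n, Function.update f m (g m) n) 0 := by
  have := HasDerivAt.fun_finsetProd (u := univ) (x := (0 : 𝕜))
    (fun n _ => ((hasDerivAt_id (0 : 𝕜)).mul_const (g n)).const_add (f n))
  simpa [prod_update_of_mem, sdiff_singleton_eq_erase, mul_comm] using this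

theorem stmt3_general (K p : ℕ)
    (S : Matrix (Fin p → Fin K) (Fin p → Fin K) ℝ) (hS : S.PosSemidef)
    (H : Matrix (Fin K) (Fin K) ℝ → ℝ)
    (hH : ∀ q : Matrix (Fin K) (Fin K) ℝ,
      H q = ∑ i : Fin p → Fin K, ∑ j : Fin p → Fin K, S i j * ∏ n, q (i n) (j n)) :
    ∀ q : Matrix (Fin K) (Fin K) ℝ, q.PosSemidef →
      ∀ a : Matrix (Fin K) (Fin K) ℝ, a.PosSemidef →
        ∀ d : ℝ, HasDerivAt (fun s : ℝ => H (q + s • a)) d 0 → 0 ≤ d := by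
  classical
  intro q hq a ha d hd
  let B (m : Fin p) : Fin p → Matrix (Fin K) (Fin K) ℝ := Function.update (fun _ => q) m a
  have hB (m n : Fin p) : (B m n).PosSemidef := by
    rcases eq_or_ne n m with rfl | h
    · simpa [B] using ha
    · simpa [B, h] using hq
  have hD : HasDerivAt (fun s : ℝ => H (q + s • a))
      (∑ i, ∑ j, S i j * ∑ m, ∏ n, B m n (i n) (j n)) 0 := by
    simp only [hH, Matrix.add_apply, Matrix.smul_apply, smul_eq_mul]
    refine HasDerivAt.fun_sum fun i _ => HasDerivAt.fun_sum fun j _ => ?_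
    refine ((hasDerivAt_prod_add_mul _ _).const_mul (S i j)).congr_deriv ?_
    refine congrArg _ (sum_congr rfl fun m _ => prod_congr rfl fun n _ => ?_)
    rcases eq_or_ne n m with rfl | h <;> simp [B, *]
  rw [hd.unique hD]
  simp_rw [mul_sum]
  rw [sum_congr rfl fun i _ => sum_comm, sum_comm]
  exact sum_nonneg fun m _ => hS.sum_mul_apply_nonneg (posSemidef_of_prod_apply (hB m))

/-- Let `S` be a positive semidefinite `K^p × K^p` matrix and
`H(q) = S · q^{⊗p}`. Then the differential of `H` at every positive semidefinite `q`
is positive semidefinite, i.e. every directional derivative of `H` at `q` in a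
positive semidefinite direction `a` is nonnegative. -/
theorem stmt3 (K p : ℕ) (hp : 1 ≤ p)
    (S : Matrix (Fin p → Fin K) (Fin p → Fin K) ℝ) (hS : S.PosSemidef)
    (H : Matrix (Fin K) (Fin K) ℝ → ℝ)
    (hH : ∀ q : Matrix (Fin K) (Fin K) ℝ,
      H q = ∑ i : Fin p → Fin K, ∑ j : Fin p → Fin K, S i j * ∏ n, q (i n) (j n)) :
    ∀ q : Matrix (Fin K) (Fin K) ℝ, q.PosSemidef →
      ∀ a : Matrix (Fin K) (Fin K) ℝ, a.PosSemidef →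
        ∀ d : ℝ, HasDerivAt (fun s : ℝ => H (q + s • a)) d 0 → 0 ≤ d :=
  stmt3_general K p S hS H hH
end

section
/- For q ∈ S^K_+ define H(q) = Σ_{j,j'=1}^K (q_{j,j'})^p. If p = 1 or p is even, then H is convex on S^K_+. Moreover, for a ∈ S^K and q ∈ S^K_+, the second directional derivative equals p(p-1) (a∘a)·(q∘···∘q) (p−2 Hadamard factors), which is nonnegative when p=1 or p is even. -/
/-!
Along every line `s ↦ q + s • a` the function `H` is a sum of the one-variable functions
`s ↦ (q j j' + s * a j j') ^ p`, whose second derivative at `0` is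
`p (p - 1) (a j j')² (q j j') ^ (p - 2)`. For `p = 1` this vanishes, and for even `p` the
exponent `p - 2` is even, so every term is nonnegative; convexity of `H` follows in the same way
from convexity of `t ↦ t ^ p` on all of `ℝ`.
-/

open Finset Set

lemma convexOn_pow_of_eq_one_or_even {p : ℕ} (hp : p = 1 ∨ Even p) :
    ConvexOn ℝ univ fun t : ℝ => t ^ p := by
  rcases hp with rfl | hp
  · simp only [pow_one]
    exact convexOn_id convex_univ
  · exact hp.convexOn_pow

lemma even_sub_two_of_eq_one_or_even {p : ℕ} (hp : p = 1 ∨ Even p) : Even (p - 2) := by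
  rcases hp with rfl | hp
  · decide
  · exact hp.tsub even_two

lemma Matrix.convex_setOf_posSemidef (n : Type*) [Fintype n] :
    Convex ℝ {q : Matrix n n ℝ | q.PosSemidef} :=
  fun _ hx _ hy _ _ ha hb _ => (hx.smul ha).add (hy.smul hb)

lemma convexOn_sum_entries {m n : Type*} [Fintype m] [Fintype n] {φ : ℝ → ℝ}
    (hφ : ConvexOn ℝ univ φ) :
    ConvexOn ℝ univ fun q : Matrix m n ℝ => ∑ i, ∑ j, φ (q i j) := by
  refine ⟨convex_univ, fun x _ y _ a b ha hb hab => ?_⟩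
  calc ∑ i, ∑ j, φ ((a • x + b • y) i j)
      ≤ ∑ i, ∑ j, (a * φ (x i j) + b * φ (y i j)) := by
        gcongr with i _ j _
        exact hφ.2 trivial trivial ha hb hab
    _ = a * ∑ i, ∑ j, φ (x i j) + b * ∑ i, ∑ j, φ (y i j) := by
        simp only [sum_add_distrib, mul_sum]

lemma iteratedDeriv_two_pow_affine (p : ℕ) (x c : ℝ) :
    iteratedDeriv 2 (fun s : ℝ => (x + s * c) ^ p) 0 =
      ((p * (p - 1) : ℕ) : ℝ) * (c ^ 2 * x ^ (p - 2)) := by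
  have hline : ∀ s : ℝ, HasDerivAt (fun s : ℝ => x + s * c) c s := fun s => by
    simpa using ((hasDerivAt_id s).mul_const c).const_add x
  have hderiv : deriv (fun s : ℝ => (x + s * c) ^ p) = fun s => p * (x + s * c) ^ (p - 1) * c :=
    funext fun s => ((hline s).pow p).deriv
  have hderiv2 : HasDerivAt (fun s : ℝ => p * (x + s * c) ^ (p - 1) * c)
      (p * ((p - 1 : ℕ) * x ^ (p - 1 - 1) * c) * c) 0 := by
    simpa using (((hline 0).pow (p - 1)).const_mul (p : ℝ)).mul_const c
  rw [iteratedDeriv_succ, iteratedDeriv_one, hderiv, hderiv2.deriv, Nat.sub_sub]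
  push_cast
  ring

lemma iteratedDeriv_two_sum_entries_pow {m n : Type*} [Fintype m] [Fintype n] (p : ℕ)
    (q a : Matrix m n ℝ) :
    iteratedDeriv 2 (fun s : ℝ => ∑ i, ∑ j, ((q + s • a) i j) ^ p) 0 =
      ((p * (p - 1) : ℕ) : ℝ) * ∑ i, ∑ j, (a i j) ^ 2 * (q i j) ^ (p - 2) := by
  simp only [Matrix.add_apply, Matrix.smul_apply, smul_eq_mul]
  rw [iteratedDeriv_fun_sum (f := fun i s => ∑ j, (q i j + s * a i j) ^ p) fun i _ => by fun_prop,
    mul_sum]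
  refine sum_congr rfl fun i _ => ?_
  rw [iteratedDeriv_fun_sum (f := fun j s => (q i j + s * a i j) ^ p) fun j _ => by fun_prop,
    mul_sum]
  exact sum_congr rfl fun j _ => iteratedDeriv_two_pow_affine p _ _

/-- For `H(q) = Σ_{j,j'} (q_{jj'})^p` with `p = 1` or `p` even, `H` is convex on the
positive semidefinite cone; moreover for symmetric `a` and positive semidefinite `q`
the second directional derivative of `H` at `q` along `a` equals
`p(p-1) Σ_{j,j'} (a_{jj'})² (q_{jj'})^{p-2}`, which is nonnegative. -/
theorem stmt4 (K p : ℕ) (hp : p = 1 ∨ Even p)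
    (H : Matrix (Fin K) (Fin K) ℝ → ℝ)
    (hH : ∀ q : Matrix (Fin K) (Fin K) ℝ,
      H q = ∑ j : Fin K, ∑ j' : Fin K, (q j j') ^ p) :
    ConvexOn ℝ {q : Matrix (Fin K) (Fin K) ℝ | q.PosSemidef} H ∧
    ∀ a q : Matrix (Fin K) (Fin K) ℝ, a.IsSymm → q.PosSemidef →
      (iteratedDeriv 2 (fun s : ℝ => H (q + s • a)) 0 =
        ((p * (p - 1) : ℕ) : ℝ) *
          ∑ j : Fin K, ∑ j' : Fin K, (a j j') ^ 2 * (q j j') ^ (p - 2)) ∧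
      0 ≤ ((p * (p - 1) : ℕ) : ℝ) *
          ∑ j : Fin K, ∑ j' : Fin K, (a j j') ^ 2 * (q j j') ^ (p - 2) := by
  obtain rfl : H = fun q => ∑ j, ∑ j', (q j j') ^ p := funext hH
  refine ⟨(convexOn_sum_entries (convexOn_pow_of_eq_one_or_even hp)).subset
    (subset_univ _) (Matrix.convex_setOf_posSemidef _), fun a q _ _ =>
    ⟨iteratedDeriv_two_sum_entries_pow p q a, ?_⟩⟩
  have hpow : ∀ x : ℝ, 0 ≤ x ^ (p - 2) := (even_sub_two_of_eq_one_or_even hp).pow_nonneg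
  exact mul_nonneg (Nat.cast_nonneg _) <|
    sum_nonneg fun i _ => sum_nonneg fun j _ => mul_nonneg (sq_nonneg _) (hpow _)
end

section
/- Let ψ: S^K_+ → R be convex, Lipschitz, and nondecreasing, and let H: S^K_+ → R be continuous. Define f(t,x) = sup_{z∈S^K_+} inf_{y∈S^K_+} { z·(x−y) + ψ(y) + t H(z) } for (t,x) ∈ [0,∞) × S^K_+. Then f(0,·) = ψ; that is, for every x ∈ S^K_+, sup_{z∈S^K_+} inf_{y∈S^K_+} { z·(x−y) + ψ(y) } = ψ(x). -/
/-- The Frobenius norm of a matrix. -/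
noncomputable def frob {K : ℕ} (a : Matrix (Fin K) (Fin K) ℝ) : ℝ :=
  Real.sqrt (∑ i, ∑ j, (a i j) ^ 2)

/-!
Taking `y = x` bounds the supremum by `ψ x`. Conversely, for `r < ψ x` we need a positive
semidefinite `z` with `r + z · (y - x) ≤ ψ y` on the cone. We separate `(x, r)` from the
epigraph of the least nondecreasing extension of `ψ` to `S^K_+ - S^K_+`: monotonicity and the
Lipschitz bound, applied through `w ≤ frob w • 1`, show `ψ x - c · frob (x - w) ≤ t` on this
epigraph, so `(x, r)` is not in its closure. The separating functional is nonnegative on the cone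
because the epigraph is stable under subtracting cone elements, and the self-duality of the cone
for the trace pairing turns it into a positive semidefinite `z`.
-/

section MonotoneEpigraph

variable {E : Type*} [AddCommGroup E] [Module ℝ E]

/-- The epigraph of `w ↦ inf {ψ y | y ∈ P, y - w ∈ P}`, the least extension of `ψ` to `P - P`
that is nondecreasing for the order defined by `P`. -/
def monotoneEpigraph (P : Set E) (ψ : E → ℝ) : Set (E × ℝ) :=
  {p | ∃ y ∈ P, ∃ s ∈ P, p.1 = y - s ∧ ψ y ≤ p.2}

theorem ConvexOn.convex_monotoneEpigraph {P : Set E} {ψ : E → ℝ} (hψ : ConvexOn ℝ P ψ) :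
    Convex ℝ (monotoneEpigraph P ψ) := by
  rintro ⟨w₁, t₁⟩ ⟨y₁, hy₁, s₁, hs₁, rfl, ht₁⟩ ⟨w₂, t₂⟩ ⟨y₂, hy₂, s₂, hs₂, rfl, ht₂⟩ a b ha hb hab
  refine ⟨a • y₁ + b • y₂, hψ.1 hy₁ hy₂ ha hb hab, a • s₁ + b • s₂, hψ.1 hs₁ hs₂ ha hb hab,
    by simp only [Prod.fst_add, Prod.smul_fst]; module, ?_⟩
  calc ψ (a • y₁ + b • y₂) ≤ a * ψ y₁ + b * ψ y₂ := hψ.2 hy₁ hy₂ ha hb hab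
    _ ≤ a * t₁ + b * t₂ := by gcongr
    _ = _ := by simp

variable [TopologicalSpace E] [IsTopologicalAddGroup E] [ContinuousSMul ℝ E]
  [LocallyConvexSpace ℝ E]

theorem exists_nonneg_add_le_of_notMem_closure_monotoneEpigraph {P : Set E} {ψ : E → ℝ}
    (hψ : ConvexOn ℝ P ψ) (hP : ∀ c : ℝ, 0 ≤ c → ∀ s ∈ P, c • s ∈ P) {x : E} (hx : x ∈ P)
    {r : ℝ} (hr : (x, r) ∉ closure (monotoneEpigraph P ψ)) :
    ∃ φ : E →L[ℝ] ℝ, (∀ s ∈ P, 0 ≤ φ s) ∧ ∀ y ∈ P, r + φ (y - x) ≤ ψ y := by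
  obtain ⟨f, u, hfS, hfx⟩ :=
    geometric_hahn_banach_closed_point hψ.convex_monotoneEpigraph.closure isClosed_closure hr
  set φ := f.comp (ContinuousLinearMap.inl ℝ E ℝ)
  set β := f (0, 1)
  have hf : ∀ w t, f (w, t) = φ w + t * β := fun w t => by
    have : ((w, t) : E × ℝ) = (w, 0) + t • (0, 1) := by simp
    rw [this, map_add, map_smul, smul_eq_mul]; rfl
  have hP0 : (0 : E) ∈ P := by simpa using hP 0 le_rfl x hx
  have hlt : ∀ y ∈ P, ∀ s ∈ P, φ (y - s) + ψ y * β < u := fun y hy s hs => by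
    rw [← hf]; exact hfS _ (subset_closure ⟨y, hy, s, hs, rfl, le_rfl⟩)
  have hux : u < φ x + r * β := hf x r ▸ hfx
  have hrx : r < ψ x := by
    by_contra! h
    exact hr (subset_closure ⟨x, hx, 0, hP0, (sub_zero x).symm, h⟩)
  have hβ : β < 0 := by
    have := hlt x hx 0 hP0
    rw [sub_zero] at this
    exact neg_of_mul_neg_right (by linarith : (ψ x - r) * β < 0) (by linarith)
  have hφ : ∀ s ∈ P, 0 ≤ φ s := by
    intro s hs
    by_contra! hs'
    -- for this `c`, the point `(x - c • s, ψ x)` of the epigraph lies on the hyperplane `f = u`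
    set c := (u - φ x - ψ x * β) / -φ s
    have hc : 0 ≤ c := div_nonneg (by linarith [sub_zero x ▸ hlt x hx 0 hP0]) (by linarith)
    have := hlt x hx _ (hP c hc s hs)
    rw [map_sub, map_smul, smul_eq_mul] at this
    have : c * -φ s = u - φ x - ψ x * β := div_mul_cancel₀ _ (by linarith)
    linarith
  refine ⟨(-β)⁻¹ • φ, fun s hs => ?_, fun y hy => ?_⟩
  · simpa using mul_nonneg (inv_nonneg.2 (neg_nonneg.2 hβ.le)) (hφ s hs)
  · have := hlt y hy 0 hP0
    rw [sub_zero] at this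
    have key : φ (y - x) < (ψ y - r) * -β := by rw [map_sub]; linarith
    rw [smul_apply, smul_eq_mul, inv_mul_eq_div]
    linarith [(div_lt_iff₀ (neg_pos.2 hβ)).2 key]

end MonotoneEpigraph

namespace Matrix

instance {m n : Type*} : LocallyConvexSpace ℝ (Matrix m n ℝ) :=
  inferInstanceAs (LocallyConvexSpace ℝ (m → n → ℝ))

variable {n : Type*} [Fintype n]

theorem exists_trace_mul_eq (φ : Matrix n n ℝ →ₗ[ℝ] ℝ) :
    ∃ Z : Matrix n n ℝ, ∀ A, (Z * A).trace = φ A := by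
  classical
  refine ⟨of fun i j => φ (single j i 1), fun A => ?_⟩
  induction A using Matrix.induction_on' with
  | h_zero => simp
  | h_add A B hA hB => rw [Matrix.mul_add, trace_add, hA, hB, map_add]
  | h_std_basis i j c =>
    rw [trace_mul_single, ← mul_one c, ← smul_eq_mul, ← smul_single, map_smul]
    simp [mul_comm]

theorem dotProduct_mulVec_eq_trace_mul_vecMulVec (Z : Matrix n n ℝ) (v : n → ℝ) :
    v ⬝ᵥ (Z *ᵥ v) = (Z * vecMulVec v v).trace := by
  simp only [trace, diag, mul_apply, vecMulVec_apply, dotProduct, mulVec, Finset.mul_sum]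
  exact Finset.sum_congr rfl fun i _ => Finset.sum_congr rfl fun j _ => by ring

theorem exists_posSemidef_trace_mul_eq (φ : Matrix n n ℝ →ₗ[ℝ] ℝ)
    (hφ : ∀ A : Matrix n n ℝ, A.PosSemidef → 0 ≤ φ A) :
    ∃ Z : Matrix n n ℝ, Z.PosSemidef ∧
      ∀ A : Matrix n n ℝ, A.IsHermitian → (Z * A).trace = φ A := by
  obtain ⟨Z, hZ⟩ := exists_trace_mul_eq φ
  have hsymm : ∀ A : Matrix n n ℝ, A.IsHermitian → ((2⁻¹ : ℝ) • (Z + Zᵀ) * A).trace = φ A := by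
    intro A hA
    have hAt : Aᵀ = A := hA
    have : (Zᵀ * A).trace = (Z * A).trace := by
      rw [← hAt, trace_transpose_mul, hAt]
    rw [smul_mul, add_mul, trace_smul, trace_add, this, hZ, smul_eq_mul]
    ring
  refine ⟨(2⁻¹ : ℝ) • (Z + Zᵀ), .of_dotProduct_mulVec_nonneg ?_ fun v => ?_, hsymm⟩
  · show ((2⁻¹ : ℝ) • (Z + Zᵀ))ᵀ = _
    rw [transpose_smul, transpose_add, transpose_transpose, add_comm]
  · have hv := posSemidef_vecMulVec_self_star v
    rw [star_trivial] at hv ⊢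
    rw [dotProduct_mulVec_eq_trace_mul_vecMulVec, hsymm _ hv.1]
    exact hφ _ hv

end Matrix

open Matrix

section Frob

variable {K : ℕ}

theorem continuous_frob : Continuous (frob : Matrix (Fin K) (Fin K) ℝ → ℝ) := by
  unfold frob; fun_prop

@[simp] theorem frob_zero : frob (0 : Matrix (Fin K) (Fin K) ℝ) = 0 := by simp [frob]

theorem frob_smul (c : ℝ) (a : Matrix (Fin K) (Fin K) ℝ) : frob (c • a) = |c| * frob a := by
  simp only [frob, Matrix.smul_apply, smul_eq_mul, mul_pow, ← Finset.mul_sum]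
  rw [Real.sqrt_mul (sq_nonneg c), Real.sqrt_sq_eq_abs]

theorem dotProduct_mulVec_le_frob_mul (m : Matrix (Fin K) (Fin K) ℝ) (v : Fin K → ℝ) :
    v ⬝ᵥ (m *ᵥ v) ≤ frob m * (v ⬝ᵥ v) := by
  have hquad : v ⬝ᵥ (m *ᵥ v) = ∑ p : Fin K × Fin K, m p.1 p.2 * (v p.1 * v p.2) := by
    simp only [Fintype.sum_prod_type, dotProduct, mulVec, Finset.mul_sum]
    exact Finset.sum_congr rfl fun i _ => Finset.sum_congr rfl fun j _ => by ring
  have hsq : ∑ p : Fin K × Fin K, (v p.1 * v p.2) ^ 2 = (v ⬝ᵥ v) ^ 2 := by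
    simp only [Fintype.sum_prod_type, dotProduct, sq, Finset.sum_mul_sum]
    exact Finset.sum_congr rfl fun i _ => Finset.sum_congr rfl fun j _ => by ring
  have hvv : 0 ≤ v ⬝ᵥ v := Fintype.sum_nonneg fun i => mul_self_nonneg (v i)
  calc v ⬝ᵥ (m *ᵥ v)
      ≤ √(∑ p : Fin K × Fin K, m p.1 p.2 ^ 2) * √(∑ p : Fin K × Fin K, (v p.1 * v p.2) ^ 2) :=
        hquad ▸ Real.sum_mul_le_sqrt_mul_sqrt _ _ _
    _ = frob m * (v ⬝ᵥ v) := by rw [hsq, Real.sqrt_sq hvv, frob, Fintype.sum_prod_type]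

theorem posSemidef_frob_smul_one_sub {m : Matrix (Fin K) (Fin K) ℝ} (hm : m.IsHermitian) :
    (frob m • (1 : Matrix (Fin K) (Fin K) ℝ) - m).PosSemidef := by
  refine .of_dotProduct_mulVec_nonneg ((isHermitian_one.smul (.all _)).sub hm) fun v => ?_
  rw [star_trivial, sub_mulVec, dotProduct_sub, smul_mulVec, one_mulVec, dotProduct_smul,
    smul_eq_mul, sub_nonneg]
  exact dotProduct_mulVec_le_frob_mul m v

end Frob

section HopfInitialCondition

variable {K : ℕ} {ψ : Matrix (Fin K) (Fin K) ℝ → ℝ} {L : ℝ}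

theorem sub_mul_frob_le_of_mem_monotoneEpigraph
    (hψlip : ∀ x y : Matrix (Fin K) (Fin K) ℝ, x.PosSemidef → y.PosSemidef →
      |ψ x - ψ y| ≤ L * frob (x - y))
    (hψmono : ∀ a b : Matrix (Fin K) (Fin K) ℝ, a.PosSemidef → b.PosSemidef →
      (a - b).PosSemidef → ψ b ≤ ψ a)
    {x : Matrix (Fin K) (Fin K) ℝ} (hx : x.PosSemidef) {w : Matrix (Fin K) (Fin K) ℝ} {t : ℝ}
    (hwt : (w, t) ∈ monotoneEpigraph {A | A.PosSemidef} ψ) :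
    ψ x - L * frob (1 : Matrix (Fin K) (Fin K) ℝ) * frob (x - w) ≤ t := by
  obtain ⟨y, hy, s, hs, rfl, ht⟩ := hwt
  set δ := frob (x - (y - s))
  have hδ : 0 ≤ δ := Real.sqrt_nonneg _
  have hyδ : (y + δ • 1).PosSemidef := hy.add (PosSemidef.one.smul hδ)
  have hxy : (y + δ • 1 - x).PosSemidef := by
    have := hs.add (posSemidef_frob_smul_one_sub (hx.1.sub (hy.1.sub hs.1)))
    convert this using 1
    abel
  rw [sub_le_iff_le_add]
  calc ψ x ≤ ψ (y + δ • 1) := hψmono _ _ hyδ hx hxy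
    _ ≤ ψ y + L * frob (δ • (1 : Matrix (Fin K) (Fin K) ℝ)) := by
        have := (le_abs_self _).trans (hψlip _ _ hyδ hy)
        rw [add_sub_cancel_left] at this
        linarith
    _ = ψ y + L * frob (1 : Matrix (Fin K) (Fin K) ℝ) * δ := by
        rw [frob_smul, abs_of_nonneg hδ]; ring
    _ ≤ t + L * frob (1 : Matrix (Fin K) (Fin K) ℝ) * δ := by gcongr

theorem notMem_closure_monotoneEpigraph_posSemidef
    (hψlip : ∀ x y : Matrix (Fin K) (Fin K) ℝ, x.PosSemidef → y.PosSemidef →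
      |ψ x - ψ y| ≤ L * frob (x - y))
    (hψmono : ∀ a b : Matrix (Fin K) (Fin K) ℝ, a.PosSemidef → b.PosSemidef →
      (a - b).PosSemidef → ψ b ≤ ψ a)
    {x : Matrix (Fin K) (Fin K) ℝ} (hx : x.PosSemidef) {r : ℝ} (hr : r < ψ x) :
    (x, r) ∉ closure (monotoneEpigraph {A | A.PosSemidef} ψ) := by
  intro h
  set C := {p : Matrix (Fin K) (Fin K) ℝ × ℝ |
    ψ x - L * frob (1 : Matrix (Fin K) (Fin K) ℝ) * frob (x - p.1) ≤ p.2}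
  have hC : IsClosed C := isClosed_le (continuous_const.sub (continuous_const.mul
    (continuous_frob.comp (continuous_const.sub continuous_fst)))) continuous_snd
  have hsub : monotoneEpigraph {A | A.PosSemidef} ψ ⊆ C := fun ⟨_, _⟩ hp =>
    sub_mul_frob_le_of_mem_monotoneEpigraph hψlip hψmono hx hp
  have hxr : (x, r) ∈ C := closure_minimal hsub hC h
  simp only [C, Set.mem_ofPred_eq, sub_self, frob_zero, mul_zero, sub_zero] at hxr
  linarith

theorem exists_posSemidef_le_trace_mul_sub_add
    (hψconv : ConvexOn ℝ {x : Matrix (Fin K) (Fin K) ℝ | x.PosSemidef} ψ)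
    (hψlip : ∀ x y : Matrix (Fin K) (Fin K) ℝ, x.PosSemidef → y.PosSemidef →
      |ψ x - ψ y| ≤ L * frob (x - y))
    (hψmono : ∀ a b : Matrix (Fin K) (Fin K) ℝ, a.PosSemidef → b.PosSemidef →
      (a - b).PosSemidef → ψ b ≤ ψ a)
    {x : Matrix (Fin K) (Fin K) ℝ} (hx : x.PosSemidef) {r : ℝ} (hr : r < ψ x) :
    ∃ Z : Matrix (Fin K) (Fin K) ℝ, Z.PosSemidef ∧
      ∀ y : Matrix (Fin K) (Fin K) ℝ, y.PosSemidef → r ≤ (Z * (x - y)).trace + ψ y := by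
  obtain ⟨φ, hφ, hle⟩ := exists_nonneg_add_le_of_notMem_closure_monotoneEpigraph hψconv
    (fun c hc s hs => hs.smul hc) hx (notMem_closure_monotoneEpigraph_posSemidef hψlip hψmono hx hr)
  obtain ⟨Z, hZ, hZφ⟩ := exists_posSemidef_trace_mul_eq φ.toLinearMap hφ
  refine ⟨Z, hZ, fun y hy => ?_⟩
  have hneg : φ (y - x) = -φ (x - y) := by rw [← map_neg, neg_sub]
  rw [hZφ _ (hx.1.sub hy.1), ContinuousLinearMap.coe_coe]
  linarith [hle y hy]

end HopfInitialCondition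

theorem stmt10_general (K : ℕ) (ψ : Matrix (Fin K) (Fin K) ℝ → ℝ) (L : ℝ)
    (hψconv : ConvexOn ℝ {x : Matrix (Fin K) (Fin K) ℝ | x.PosSemidef} ψ)
    (hψlip : ∀ x y : Matrix (Fin K) (Fin K) ℝ, x.PosSemidef → y.PosSemidef →
      |ψ x - ψ y| ≤ L * frob (x - y))
    (hψmono : ∀ a b : Matrix (Fin K) (Fin K) ℝ, a.PosSemidef → b.PosSemidef →
      (a - b).PosSemidef → ψ b ≤ ψ a) :
    ∀ x : Matrix (Fin K) (Fin K) ℝ, x.PosSemidef →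
      (⨆ z ∈ {z : Matrix (Fin K) (Fin K) ℝ | z.PosSemidef},
        ⨅ y ∈ {y : Matrix (Fin K) (Fin K) ℝ | y.PosSemidef},
          ((((z * (x - y)).trace + ψ y : ℝ) : EReal))) = ((ψ x : ℝ) : EReal) := by
  intro x hx
  refine le_antisymm (iSup₂_le fun z _ => (iInf₂_le x hx).trans_eq (by simp)) ?_
  refine EReal.ge_of_forall_gt_iff_ge.1 fun r hr => ?_
  obtain ⟨Z, hZ, hle⟩ :=
    exists_posSemidef_le_trace_mul_sub_add hψconv hψlip hψmono hx (EReal.coe_lt_coe_iff.1 hr)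
  exact le_iSup₂_of_le Z hZ (le_iInf₂ fun y hy => EReal.coe_le_coe (hle y hy))

/-- For `ψ : S^K_+ → ℝ` convex, Lipschitz and nondecreasing and `H` continuous, the
Hopf formula `f(t,x) = sup_z inf_y { z·(x−y) + ψ(y) + tH(z) }` satisfies the initial
condition `f(0,·) = ψ`, i.e. `sup_z inf_y { z·(x−y) + ψ(y) } = ψ(x)` on the cone. -/
theorem stmt10 (K : ℕ) (ψ : Matrix (Fin K) (Fin K) ℝ → ℝ) (L : ℝ)
    (hψconv : ConvexOn ℝ {x : Matrix (Fin K) (Fin K) ℝ | x.PosSemidef} ψ)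
    (hψlip : ∀ x y : Matrix (Fin K) (Fin K) ℝ, x.PosSemidef → y.PosSemidef →
      |ψ x - ψ y| ≤ L * frob (x - y))
    (hψmono : ∀ a b : Matrix (Fin K) (Fin K) ℝ, a.PosSemidef → b.PosSemidef →
      (a - b).PosSemidef → ψ b ≤ ψ a)
    (H : Matrix (Fin K) (Fin K) ℝ → ℝ) (hH : Continuous H) :
    ∀ x : Matrix (Fin K) (Fin K) ℝ, x.PosSemidef →
      (⨆ z ∈ {z : Matrix (Fin K) (Fin K) ℝ | z.PosSemidef},
        ⨅ y ∈ {y : Matrix (Fin K) (Fin K) ℝ | y.PosSemidef},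
          ((((z * (x - y)).trace + ψ y : ℝ) : EReal))) = ((ψ x : ℝ) : EReal) :=
  stmt10_general K ψ L hψconv hψlip hψmono
end

section
/- Semigroup property of the Hopf formula: let ψ: S^K_+ → R be convex, Lipschitz, and nondecreasing, and let H: S^K_+ → R be nonnegative and such that for each t ≥ 0 the function ψ* − tH has nondecreasing, convex, lower semicontinuous double conjugate behavior as in the Fenchel–Moreau framework. Then for all s, t ≥ 0: (ψ* − (t+s)H)* = ((ψ* − tH)** − sH)*, where * denotes the Fenchel transform with supremum over S^K_+. Equivalently, the Hopf formula f(t,x) = (ψ* − tH)*(x) satisfies f(t+s,·) = (f(t,·)* − sH)*. -/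
/-- The Fenchel transform over the positive semidefinite cone. -/
noncomputable def fconj {K : ℕ} (u : Matrix (Fin K) (Fin K) ℝ → EReal)
    (x : Matrix (Fin K) (Fin K) ℝ) : EReal :=
  ⨆ y ∈ {y : Matrix (Fin K) (Fin K) ℝ | y.PosSemidef},
    ((((y * x).trace : ℝ) : EReal) - u y)

/-- The function `ψ* − tH` appearing in the Hopf formula `f(t,·) = (ψ* − tH)*`. -/
noncomputable def hopfAux {K : ℕ} (ψ H : Matrix (Fin K) (Fin K) ℝ → ℝ) (t : ℝ) :
    Matrix (Fin K) (Fin K) ℝ → EReal :=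
  fun z => fconj (fun y => ((ψ y : ℝ) : EReal)) z - ((t * H z : ℝ) : EReal)

/-!
Write `φ = ψ*` and `A r = φ - r H`. Since `A t ** ≤ A t`, the function `A t ** - s H` lies
below `A (t + s)`, which gives `≤`. For `≥`, put `θ = s / (t + s)` and let `A (t + s) *(x) < M`.
Testing `A t *` at the convex combination `θ a + (1 - θ) x` gives
`A t *(θ a + (1 - θ) x) ≤ θ ψ(a) + (1 - θ) M`; conjugating once more and taking the supremum
over `a` yields `A t **(y) ≥ θ φ(y) + (1 - θ) (tr (x y) - M)`. Combined with
`tr (y x) - A (t + s)(y) ≤ M`, this is exactly `tr (y x) - (A t **(y) - s H(y)) ≤ M`.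
-/

open Matrix

theorem EReal.sub_coe_sub_coe (e : EReal) (p q : ℝ) : e - p - q = e - ↑(p + q) := by
  induction e using EReal.rec with
  | bot => simp
  | coe r => norm_cast; ring
  | top => simp only [EReal.top_sub_coe]

theorem EReal.coe_sub_le_comm {a : ℝ} {b c : EReal} (h : (a : EReal) - c ≤ b) :
    (a : EReal) - b ≤ c := by
  induction b using EReal.rec <;> induction c using EReal.rec
  all_goals try simp [EReal.sub_top] at h ⊢
  all_goals norm_cast at h ⊢
  linarith

section Conjugate

variable {K : ℕ}

theorem le_fconj (u : Matrix (Fin K) (Fin K) ℝ → EReal) (x : Matrix (Fin K) (Fin K) ℝ)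
    {y : Matrix (Fin K) (Fin K) ℝ} (hy : y.PosSemidef) :
    (((y * x).trace : ℝ) : EReal) - u y ≤ fconj u x :=
  le_iSup₂_of_le y hy le_rfl

theorem fconj_le {u : Matrix (Fin K) (Fin K) ℝ → EReal} {x : Matrix (Fin K) (Fin K) ℝ}
    {M : EReal} (h : ∀ y : Matrix (Fin K) (Fin K) ℝ, y.PosSemidef →
      (((y * x).trace : ℝ) : EReal) - u y ≤ M) : fconj u x ≤ M :=
  iSup₂_le h

theorem fconj_anti {u v : Matrix (Fin K) (Fin K) ℝ → EReal}
    (h : ∀ y : Matrix (Fin K) (Fin K) ℝ, y.PosSemidef → u y ≤ v y)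
    (x : Matrix (Fin K) (Fin K) ℝ) : fconj v x ≤ fconj u x :=
  fconj_le fun y hy => (EReal.sub_le_sub le_rfl (h y hy)).trans (le_fconj u x hy)

theorem fconj_fconj_le (u : Matrix (Fin K) (Fin K) ℝ → EReal) {x : Matrix (Fin K) (Fin K) ℝ}
    (hx : x.PosSemidef) : fconj (fconj u) x ≤ u x :=
  fconj_le fun y _ => EReal.coe_sub_le_comm <| by
    simpa only [trace_mul_comm x y] using le_fconj u y hx

theorem fconj_coe_ne_bot (ψ : Matrix (Fin K) (Fin K) ℝ → ℝ) (x : Matrix (Fin K) (Fin K) ℝ) :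
    fconj (fun y => ((ψ y : ℝ) : EReal)) x ≠ ⊥ := by
  refine ne_bot_of_le_ne_bot ?_ (le_fconj (fun y => ((ψ y : ℝ) : EReal)) x PosSemidef.zero)
  exact EReal.coe_ne_bot ((0 * x).trace - ψ 0)

end Conjugate

section Hopf

variable {K : ℕ} (ψ H : Matrix (Fin K) (Fin K) ℝ → ℝ)

theorem hopfAux_add (t s : ℝ) (z : Matrix (Fin K) (Fin K) ℝ) :
    hopfAux ψ H (t + s) z = hopfAux ψ H t z - ((s * H z : ℝ) : EReal) := by
  rw [hopfAux, hopfAux, EReal.sub_coe_sub_coe, add_mul]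

theorem fconj_hopfAux_add_le (t s : ℝ) (x : Matrix (Fin K) (Fin K) ℝ) :
    fconj (hopfAux ψ H (t + s)) x ≤
      fconj (fun z => fconj (fconj (hopfAux ψ H t)) z - ((s * H z : ℝ) : EReal)) x :=
  fconj_anti (fun z hz => by
    rw [hopfAux_add]
    exact EReal.sub_le_sub (fconj_fconj_le _ hz) le_rfl) x

theorem fconj_hopfAux_convexComb_le {r θ M : ℝ} (hθ0 : 0 ≤ θ) (hθ1 : θ ≤ 1)
    {a x : Matrix (Fin K) (Fin K) ℝ} (ha : a.PosSemidef)
    (hM : fconj (hopfAux ψ H r) x ≤ M) :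
    fconj (hopfAux ψ H ((1 - θ) * r)) (θ • a + (1 - θ) • x) ≤
      ((θ * ψ a + (1 - θ) * M : ℝ) : EReal) := by
  refine fconj_le fun w hw => ?_
  have hφa := le_fconj (fun y => ((ψ y : ℝ) : EReal)) w ha
  have hφx := (le_fconj (hopfAux ψ H r) x hw).trans hM
  have htr : (w * (θ • a + (1 - θ) • x)).trace =
      θ * (a * w).trace + (1 - θ) * (w * x).trace := by
    simp [Matrix.mul_add, trace_mul_comm w a]
  rw [htr]
  unfold hopfAux at hφx ⊢
  generalize fconj (fun y => ((ψ y : ℝ) : EReal)) w = φw at hφa hφx ⊢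
  induction φw using EReal.rec with
  | bot => exact absurd (le_bot_iff.mp hφa) (EReal.coe_ne_bot _)
  | top =>
    rw [EReal.top_sub_coe, EReal.sub_top]
    exact bot_le
  | coe p =>
    have hφa : (a * w).trace - ψ a ≤ p := by exact_mod_cast hφa
    have hφx : (w * x).trace - (p - r * H w) ≤ M := by exact_mod_cast hφx
    refine EReal.coe_le_coe_iff.mpr ?_
    nlinarith [mul_le_mul_of_nonneg_left hφx (sub_nonneg.mpr hθ1)]

theorem le_fconj_fconj_hopfAux {r θ M : ℝ} (hθ0 : 0 ≤ θ) (hθ1 : θ ≤ 1)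
    {a x : Matrix (Fin K) (Fin K) ℝ} (ha : a.PosSemidef) (hx : x.PosSemidef)
    (hM : fconj (hopfAux ψ H r) x ≤ M) (y : Matrix (Fin K) (Fin K) ℝ) :
    ((θ * ((a * y).trace - ψ a) + (1 - θ) * ((x * y).trace - M) : ℝ) : EReal) ≤
      fconj (fconj (hopfAux ψ H ((1 - θ) * r))) y := by
  have h := (EReal.sub_le_sub le_rfl (fconj_hopfAux_convexComb_le ψ H hθ0 hθ1 ha hM)).trans
    (le_fconj _ y ((ha.smul hθ0).add (hx.smul (sub_nonneg.mpr hθ1))))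
  convert h using 1
  norm_cast
  simp only [Matrix.add_mul, Matrix.smul_mul, trace_add, trace_smul, smul_eq_mul]
  ring

theorem fconj_fconj_hopfAux_sub_le {r θ : ℝ} (hθ0 : 0 < θ) (hθ1 : θ ≤ 1)
    {x : Matrix (Fin K) (Fin K) ℝ} (hx : x.PosSemidef) :
    fconj (fun z => fconj (fconj (hopfAux ψ H ((1 - θ) * r))) z -
      ((θ * r * H z : ℝ) : EReal)) x ≤ fconj (hopfAux ψ H r) x := by
  -- bounding by every real `M > A r *(x)` also covers the case `A r *(x) = ⊥`
  refine EReal.le_of_forall_lt_iff_le.mp fun M hM => fconj_le fun y hy => ?_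
  have hT := fun (a : Matrix (Fin K) (Fin K) ℝ) (ha : a.PosSemidef) =>
    le_fconj_fconj_hopfAux ψ H hθ0.le hθ1 ha hx hM.le y
  have hφy := (le_fconj (hopfAux ψ H r) x hy).trans hM.le
  have hφy_ne_bot := fconj_coe_ne_bot ψ y
  unfold hopfAux at hφy
  generalize fconj (fconj (hopfAux ψ H ((1 - θ) * r))) y = T at hT ⊢
  induction T using EReal.rec with
  | bot => exact absurd (le_bot_iff.mp (hT 0 PosSemidef.zero)) (EReal.coe_ne_bot _)
  | top =>
    rw [EReal.top_sub_coe, EReal.sub_top]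
    exact bot_le
  | coe τ =>
    have hφ : fconj (fun y => ((ψ y : ℝ) : EReal)) y ≤
        (((τ - (1 - θ) * ((x * y).trace - M)) / θ : ℝ) : EReal) :=
      fconj_le fun a ha => by
        have h : θ * ((a * y).trace - ψ a) + (1 - θ) * ((x * y).trace - M) ≤ τ := by
          exact_mod_cast hT a ha
        have h' : (a * y).trace - ψ a ≤ (τ - (1 - θ) * ((x * y).trace - M)) / θ :=
          (le_div_iff₀' hθ0).mpr (by linarith)
        exact_mod_cast h'
    generalize fconj (fun y => ((ψ y : ℝ) : EReal)) y = φy at hφ hφy hφy_ne_bot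
    induction φy using EReal.rec with
    | bot => exact absurd rfl hφy_ne_bot
    | top => exact absurd hφ (not_le.mpr (EReal.coe_lt_top _))
    | coe q =>
      have hφ : θ * q ≤ τ - (1 - θ) * ((x * y).trace - M) := by
        rw [← le_div_iff₀' hθ0]
        exact_mod_cast hφ
      have hφy : (y * x).trace - (q - r * H y) ≤ M := by exact_mod_cast hφy
      refine EReal.coe_le_coe_iff.mpr ?_
      rw [trace_mul_comm x y] at hφ
      nlinarith [mul_le_mul_of_nonneg_left hφy hθ0.le]

end Hopf

theorem stmt13_general (K : ℕ) (ψ H : Matrix (Fin K) (Fin K) ℝ → ℝ) :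
    ∀ s t : ℝ, 0 ≤ s → 0 ≤ t → ∀ x : Matrix (Fin K) (Fin K) ℝ, x.PosSemidef →
      fconj (hopfAux ψ H (t + s)) x =
        fconj (fun z => fconj (fconj (hopfAux ψ H t)) z - ((s * H z : ℝ) : EReal)) x := by
  intro s t hs ht x hx
  refine le_antisymm (fconj_hopfAux_add_le ψ H t s x) ?_
  rcases hs.eq_or_lt with rfl | hs
  · simpa using fconj_fconj_le (fconj (hopfAux ψ H t)) hx
  · have hts : 0 < t + s := by linarith
    have h := fconj_fconj_hopfAux_sub_le ψ H (r := t + s) (div_pos hs hts)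
      ((div_le_one hts).mpr (by linarith)) hx
    have hθt : (1 - s / (t + s)) * (t + s) = t := by field_simp; ring
    have hθs : s / (t + s) * (t + s) = s := by field_simp
    rwa [hθt, hθs] at h

/-- Semigroup property of the Hopf formula: for `ψ : S^K_+ → ℝ` convex, Lipschitz and
nondecreasing, and `H ≥ 0` such that for each `t ≥ 0` the double conjugate of
`ψ* − tH` is nondecreasing, convex and lower semicontinuous on the cone (the
Fenchel–Moreau framework), one has, for all `s, t ≥ 0`,
`(ψ* − (t+s)H)* = ((ψ* − tH)** − sH)*` on the positive semidefinite cone. -/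
theorem stmt13 (K : ℕ) (ψ H : Matrix (Fin K) (Fin K) ℝ → ℝ)
    (hψconv : ConvexOn ℝ {x : Matrix (Fin K) (Fin K) ℝ | x.PosSemidef} ψ)
    (hψlip : ∃ L : ℝ, ∀ x y : Matrix (Fin K) (Fin K) ℝ, x.PosSemidef → y.PosSemidef →
      |ψ x - ψ y| ≤ L * frob (x - y))
    (hψmono : ∀ a b : Matrix (Fin K) (Fin K) ℝ, a.PosSemidef → b.PosSemidef →
      (a - b).PosSemidef → ψ b ≤ ψ a)
    (hH : ∀ z : Matrix (Fin K) (Fin K) ℝ, z.PosSemidef → 0 ≤ H z)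
    (hFM : ∀ t : ℝ, 0 ≤ t →
      (∀ a b : Matrix (Fin K) (Fin K) ℝ, a.PosSemidef → b.PosSemidef →
        (a - b).PosSemidef →
          fconj (fconj (hopfAux ψ H t)) b ≤ fconj (fconj (hopfAux ψ H t)) a) ∧
      (∀ x y : Matrix (Fin K) (Fin K) ℝ, x.PosSemidef → y.PosSemidef →
        ∀ a b : ℝ, 0 ≤ a → 0 ≤ b → a + b = 1 →
          fconj (fconj (hopfAux ψ H t)) (a • x + b • y) ≤
            ((a : ℝ) : EReal) * fconj (fconj (hopfAux ψ H t)) x +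
              ((b : ℝ) : EReal) * fconj (fconj (hopfAux ψ H t)) y) ∧
      LowerSemicontinuousOn (fconj (fconj (hopfAux ψ H t)))
        {x : Matrix (Fin K) (Fin K) ℝ | x.PosSemidef}) :
    ∀ s t : ℝ, 0 ≤ s → 0 ≤ t → ∀ x : Matrix (Fin K) (Fin K) ℝ, x.PosSemidef →
      fconj (hopfAux ψ H (t + s)) x =
        fconj (fun z => fconj (fconj (hopfAux ψ H t)) z - ((s * H z : ℝ) : EReal)) x :=
  stmt13_general K ψ H
end
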